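/- Let f(m) = (m/(m−1))·(exp((m−1)·log(1 + c/m + o(1/m))) − 1) for a constant c ≥ 0. Then lim_{m→∞} f(m) = e^c − 1. In particular, if h₁, h₂ are bounded functions and n₁^m = χ_{Ω₁} + h₁/m + o(1/m), n₂^m = χ_{Ω₂} + h₂/m + o(1/m) with Ω₁ ∩ Ω₂ = ∅, then q_m(n₁^m n₂^m) → χ_{Ω₁}(e^{h₂} − 1) + χ_{Ω₂}(e^{h₁} − 1) pointwise on Ω₁ ∪ Ω₂. -/

import Mathlib

/-!
Writing `(1 + a)^(m-1) = exp ((m-1) log (1 + a))`, the hypothesis `m a → L` gives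
`(m-1) log (1 + a) → L`, since `m log (1 + a) → L` while `log (1 + a) → 0`; together with
`m/(m-1) → 1` this yields `q_m(a) → e^L - 1`. On `Ω₁ ∪ Ω₂` exactly one of the two densities
tends to `1` and the other is `O(1/m)`, so `m n₁ n₂` tends to `h₂` on `Ω₁` and to `h₁` on `Ω₂`.
-/

open Filter Topology ProbabilityTheory

/-- The paper's `q_m`. -/
noncomputable def pressureLaw (m : ℕ) (r : ℝ) : ℝ :=
  ((m : ℝ) / ((m : ℝ) - 1)) * ((1 + r) ^ ((m : ℝ) - 1) - 1)

section

variable {a : ℕ → ℝ} {L : ℝ}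

lemma tendsto_natCast_sub_one_mul_log_one_add
    (ha : Tendsto (fun m : ℕ => (m : ℝ) * a m) atTop (𝓝 L)) :
    Tendsto (fun m : ℕ => ((m : ℝ) - 1) * Real.log (1 + a m)) atTop (𝓝 L) := by
  have hlog : Tendsto (fun m => Real.log (1 + a m)) atTop (𝓝 0) := by
    have h1 : Tendsto (fun m => 1 + a m) atTop (𝓝 1) := by
      simpa using (tendsto_zero_of_tendsto_mul_atTop ha).const_add 1
    simpa using h1.log one_ne_zero
  simpa [sub_mul] using (Real.tendsto_nat_mul_log_one_add_of_tendsto ha).sub hlog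

lemma tendsto_natCast_div_natCast_sub_one :
    Tendsto (fun m : ℕ => (m : ℝ) / ((m : ℝ) - 1)) atTop (𝓝 1) := by
  simpa [sub_eq_add_neg] using tendsto_natCast_div_add_atTop (-1 : ℝ)

lemma tendsto_exp_natCast_sub_one_mul_log_one_add
    (ha : Tendsto (fun m : ℕ => (m : ℝ) * a m) atTop (𝓝 L)) :
    Tendsto (fun m : ℕ => ((m : ℝ) / ((m : ℝ) - 1)) *
        (Real.exp (((m : ℝ) - 1) * Real.log (1 + a m)) - 1)) atTop (𝓝 (Real.exp L - 1)) := by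
  simpa using tendsto_natCast_div_natCast_sub_one.mul
    (((Real.continuous_exp.tendsto L).comp (tendsto_natCast_sub_one_mul_log_one_add ha)).sub_const 1)

lemma tendsto_pressureLaw (ha : Tendsto (fun m : ℕ => (m : ℝ) * a m) atTop (𝓝 L)) :
    Tendsto (fun m => pressureLaw m (a m)) atTop (𝓝 (Real.exp L - 1)) := by
  refine (tendsto_exp_natCast_sub_one_mul_log_one_add ha).congr' ?_
  filter_upwards [(tendsto_zero_of_tendsto_mul_atTop ha).eventually_const_lt
    (show (-1 : ℝ) < 0 by norm_num)] with m hm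
  rw [pressureLaw, Real.rpow_def_of_pos (by linarith), mul_comm (Real.log _)]

end

lemma tendsto_natCast_mul_mul_of_tendsto_natCast_mul_sub_one {u v : ℕ → ℝ} {p q : ℝ}
    (hu : Tendsto (fun m : ℕ => (m : ℝ) * (u m - 1)) atTop (𝓝 p))
    (hv : Tendsto (fun m : ℕ => (m : ℝ) * v m) atTop (𝓝 q)) :
    Tendsto (fun m : ℕ => (m : ℝ) * (u m * v m)) atTop (𝓝 q) := by
  have hu₁ : Tendsto u atTop (𝓝 1) := by
    simpa using (tendsto_zero_of_tendsto_mul_atTop hu).add_const 1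
  simpa using (hv.mul hu₁).congr fun m => by ring

theorem stmt_17_general {α : Type*} (c : ℝ) (e : ℕ → ℝ)
    (he : Tendsto (fun m : ℕ => (m : ℝ) * e m) atTop (nhds 0))
    (Ω₁ Ω₂ : Set α) (hdisj : Disjoint Ω₁ Ω₂)
    (h₁ h₂ : α → ℝ)
    (n₁ n₂ : ℕ → α → ℝ)
    (hn₁ : ∀ x, Tendsto (fun m : ℕ => (m : ℝ) * (n₁ m x - Set.indicator Ω₁ 1 x))
      atTop (nhds (h₁ x)))
    (hn₂ : ∀ x, Tendsto (fun m : ℕ => (m : ℝ) * (n₂ m x - Set.indicator Ω₂ 1 x))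
      atTop (nhds (h₂ x))) :
    Tendsto (fun m : ℕ => ((m : ℝ) / ((m : ℝ) - 1)) *
        (Real.exp (((m : ℝ) - 1) * Real.log (1 + c / (m : ℝ) + e m)) - 1))
      atTop (nhds (Real.exp c - 1)) ∧
    ∀ x ∈ Ω₁ ∪ Ω₂,
      Tendsto (fun m : ℕ => ((m : ℝ) / ((m : ℝ) - 1)) *
          ((1 + n₁ m x * n₂ m x) ^ ((m : ℝ) - 1) - 1))
        atTop (nhds (Set.indicator Ω₁ 1 x * (Real.exp (h₂ x) - 1)
          + Set.indicator Ω₂ 1 x * (Real.exp (h₁ x) - 1))) := by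
  refine ⟨?_, fun x hx => ?_⟩
  · have hc : Tendsto (fun m : ℕ => (m : ℝ) * (c / m + e m)) atTop (𝓝 c) := by
      refine (by simpa using he.const_add c : Tendsto _ _ (𝓝 c)).congr' ?_
      filter_upwards [eventually_ne_atTop 0] with m hm
      field_simp
    simpa only [add_assoc] using tendsto_exp_natCast_sub_one_mul_log_one_add hc
  · rcases hx with hx | hx
    · have hx₂ : x ∉ Ω₂ := hdisj.notMem_of_mem_left hx
      have := tendsto_natCast_mul_mul_of_tendsto_natCast_mul_sub_one
        (by simpa [hx] using hn₁ x) (by simpa [hx₂] using hn₂ x)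
      simpa [pressureLaw, hx, hx₂] using tendsto_pressureLaw this
    · have hx₁ : x ∉ Ω₁ := hdisj.notMem_of_mem_right hx
      have := tendsto_natCast_mul_mul_of_tendsto_natCast_mul_sub_one
        (by simpa [hx] using hn₂ x) (by simpa [hx₁] using hn₁ x)
      simpa [pressureLaw, hx, hx₁, mul_comm (n₁ _ x)] using tendsto_pressureLaw this

/-- 'ghost effect': with `f(m) = (m/(m−1))(exp((m−1)log(1 + c/m + o(1/m))) − 1)`,
`f(m) → e^c − 1`. In particular, if `n₁^m = χ_{Ω₁} + h₁/m + o(1/m)` and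
`n₂^m = χ_{Ω₂} + h₂/m + o(1/m)` pointwise, with `h₁, h₂` bounded and `Ω₁ ∩ Ω₂ = ∅`, then
`q_m(n₁^m n₂^m) → χ_{Ω₁}(e^{h₂} − 1) + χ_{Ω₂}(e^{h₁} − 1)` pointwise on `Ω₁ ∪ Ω₂`. -/
theorem stmt_17 {α : Type*} (c : ℝ) (hc : 0 ≤ c) (e : ℕ → ℝ)
    (he : Tendsto (fun m : ℕ => (m : ℝ) * e m) atTop (nhds 0))
    (Ω₁ Ω₂ : Set α) (hdisj : Disjoint Ω₁ Ω₂)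
    (h₁ h₂ : α → ℝ) (hb₁ : ∃ M, ∀ x, |h₁ x| ≤ M) (hb₂ : ∃ M, ∀ x, |h₂ x| ≤ M)
    (n₁ n₂ : ℕ → α → ℝ)
    (hn₁ : ∀ x, Tendsto (fun m : ℕ => (m : ℝ) * (n₁ m x - Set.indicator Ω₁ 1 x))
      atTop (nhds (h₁ x)))
    (hn₂ : ∀ x, Tendsto (fun m : ℕ => (m : ℝ) * (n₂ m x - Set.indicator Ω₂ 1 x))
      atTop (nhds (h₂ x))) :
    Tendsto (fun m : ℕ => ((m : ℝ) / ((m : ℝ) - 1)) *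
        (Real.exp (((m : ℝ) - 1) * Real.log (1 + c / (m : ℝ) + e m)) - 1))
      atTop (nhds (Real.exp c - 1)) ∧
    ∀ x ∈ Ω₁ ∪ Ω₂,
      Tendsto (fun m : ℕ => ((m : ℝ) / ((m : ℝ) - 1)) *
          ((1 + n₁ m x * n₂ m x) ^ ((m : ℝ) - 1) - 1))
        atTop (nhds (Set.indicator Ω₁ 1 x * (Real.exp (h₂ x) - 1)
          + Set.indicator Ω₂ 1 x * (Real.exp (h₁ x) - 1))) :=
  stmt_17_general c e he Ω₁ Ω₂ hdisj h₁ h₂ n₁ n₂ hn₁ hn₂
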